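/- For all sequences i₁,…,i_k and j₁,…,j_{k′} in [−n,n]* such that x_{i₁}⋯x_{i_k} = x_{j₁}⋯x_{j_{k′}} as monomials, one has Ψ_{i₁,…,i_k} − Ψ_{j₁,…,j_{k′}} ∈ K₁. -/

import Mathlib

open scoped BigOperators

noncomputable section

namespace ToricBorderBasis

abbrev Exp (n : ℕ) := Fin n → ℤ

abbrev LaurentS (n : ℕ) (k : Type*) [Field k] : Type _ := AddMonoidAlgebra k (Exp n)

variable {k : Type*} [Field k] {n : ℕ}

def edeg {n : ℕ} (α : Exp n) : ℕ := ∑ i, (α i).natAbs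

def mono (k : Type*) [Field k] {n : ℕ} (α : Exp n) : LaurentS n k :=
  AddMonoidAlgebra.ofCoeff (Finsupp.single α 1)

def pdeg (p : LaurentS n k) : ℕ := (p.coeff : Exp n →₀ k).support.sup edeg

def expOf (n : ℕ) (i : Fin n) (s : Bool) : Exp n :=
  Pi.single i (if s then 1 else -1)

def varX (k : Type*) [Field k] {n : ℕ} (i : Fin n) (s : Bool) : LaurentS n k :=
  mono k (expOf n i s)

def Bx {n : ℕ} (B : Set (Exp n)) : Set (Exp n) :=
  B ∪ {β | ∃ i s, ∃ α ∈ B, β = expOf n i s + α}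

def bord {n : ℕ} (B : Set (Exp n)) : Set (Exp n) := Bx B \ B

def ConnectedToOne {n : ℕ} (B : Set (Exp n)) : Prop :=
  (0 : Exp n) ∈ B ∧ ∀ α ∈ B, α ≠ 0 →
    ∃ i s, ∃ α' ∈ B, α = expOf n i s + α' ∧ edeg α' < edeg α

def spanMon (k : Type*) [Field k] {n : ℕ} (A : Set (Exp n)) :
    Submodule k (LaurentS n k) :=
  Submodule.span k {p | ∃ α ∈ A, p = mono k α}

def Xop (π : LaurentS n k →ₗ[k] LaurentS n k) (i : Fin n) (s : Bool) :
    LaurentS n k →ₗ[k] LaurentS n k :=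
  π ∘ₗ LinearMap.mulLeft k (varX k i s)

/-- `π` is a projection from `⟨B^×⟩` onto `⟨B⟩`. -/
def IsProj (π : LaurentS n k →ₗ[k] LaurentS n k) (B : Set (Exp n)) : Prop :=
  (∀ p ∈ spanMon k (Bx B), π p ∈ spanMon k B) ∧ (∀ p ∈ spanMon k B, π p = p)

/-- The operators `X_i`, `i ∈ [−n,n]*`, pairwise commute on `⟨B⟩`. -/
def CommRelAll (π : LaurentS n k →ₗ[k] LaurentS n k) (B : Set (Exp n)) : Prop :=
  ∀ (i : Fin n) (s : Bool) (j : Fin n) (t : Bool), ∀ b ∈ spanMon k B,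
    Xop π i s (Xop π j t b) = Xop π j t (Xop π i s b)

/-- `X_i ∘ X_{−i} = Id` on `⟨B⟩` for every `i ∈ [−n,n]*`. -/
def InvRelAll (π : LaurentS n k →ₗ[k] LaurentS n k) (B : Set (Exp n)) : Prop :=
  ∀ (i : Fin n) (s : Bool), ∀ b ∈ spanMon k B, Xop π i s (Xop π i (!s) b) = b

/-- The rewriting family `F = {x^β − π(x^β) : x^β ∈ ∂B}`. -/
def rewFamAll (π : LaurentS n k →ₗ[k] LaurentS n k) (B : Set (Exp n)) :
    Set (LaurentS n k) :=
  {f | ∃ β ∈ bord B, f = mono k β - π (mono k β)}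

/-- Indices of the basis `Y_i[m]` of the free module `S₁`:
pairs of a signed index `(i,s)` and `m ∈ B` with `x_i m ∉ B`. -/
def GoodIdx (n : ℕ) (B : Set (Exp n)) : Type :=
  {q : (Fin n × Bool) × Exp n // q.2 ∈ B ∧ expOf n q.1.1 q.1.2 + q.2 ∉ B}

/-- The free `S`-module `S₁` with basis the `Y_i[m]`, `m ∈ B`, `x_i m ∉ B`. -/
abbrev S1 (n : ℕ) (k : Type*) [Field k] (B : Set (Exp n)) : Type _ :=
  GoodIdx n B →₀ LaurentS n k

open Classical in
/-- The basis element `Y_i[m]`, with the convention `Y_i[m] = 0` if `x_i m ∈ B`. -/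
def Ysym (k : Type*) [Field k] {n : ℕ} (B : Set (Exp n)) (i : Fin n) (s : Bool)
    (m : Exp n) : S1 n k B :=
  if h : m ∈ B ∧ expOf n i s + m ∉ B then Finsupp.single ⟨((i, s), m), h⟩ 1 else 0

/-- `k`-linear extension `b ↦ Y_i[b]` for `b ∈ ⟨B⟩`. -/
def YsymL (k : Type*) [Field k] {n : ℕ} (B : Set (Exp n)) (i : Fin n) (s : Bool)
    (b : LaurentS n k) : S1 n k B :=
  (b.coeff : Exp n →₀ k).sum fun m c => c • Ysym k B i s m

/-- `ψ_i(m) = x_i m − π(x_i m)` for a monomial `m`. -/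
def psiMono (π : LaurentS n k →ₗ[k] LaurentS n k) (i : Fin n) (s : Bool)
    (m : Exp n) : LaurentS n k :=
  mono k (expOf n i s + m) - π (mono k (expOf n i s + m))

/-- The `S`-module map `∂₁ : S₁ → S`, `Y_i[m] ↦ ψ_i(m)`. -/
def partial1 (π : LaurentS n k →ₗ[k] LaurentS n k) (B : Set (Exp n)) :
    S1 n k B →ₗ[LaurentS n k] LaurentS n k :=
  Finsupp.lsum (LaurentS n k) fun q =>
    LinearMap.toSpanSingleton (LaurentS n k) (LaurentS n k)
      (psiMono π q.1.1.1 q.1.1.2 q.1.2)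

/-- `φ_{i,j}(m) = x_i Y_j[m] − x_j Y_i[m] − Y_j[X_i(m)] + Y_i[X_j(m)]`. -/
def phiEl (π : LaurentS n k →ₗ[k] LaurentS n k) (B : Set (Exp n))
    (i : Fin n) (s : Bool) (j : Fin n) (t : Bool) (m : Exp n) : S1 n k B :=
  varX k i s • Ysym k B j t m - varX k j t • Ysym k B i s m
    - YsymL k B j t (Xop π i s (mono k m)) + YsymL k B i s (Xop π j t (mono k m))

/-- `ρ_i(m) = x_i Y_{−i}[m] + Y_i[X_{−i}(m)]`. -/
def rhoEl (π : LaurentS n k →ₗ[k] LaurentS n k) (B : Set (Exp n))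
    (i : Fin n) (s : Bool) (m : Exp n) : S1 n k B :=
  varX k i s • Ysym k B i (!s) m + YsymL k B i s (Xop π i (!s) (mono k m))

/-- The `S`-submodule `K₁ ⊆ S₁` generated by the `ρ_i(m)` and `φ_{i,j}(m)`, `m ∈ B`. -/
def K1 (π : LaurentS n k →ₗ[k] LaurentS n k) (B : Set (Exp n)) :
    Submodule (LaurentS n k) (S1 n k B) :=
  Submodule.span (LaurentS n k)
    ({u | ∃ i s m, m ∈ B ∧ u = rhoEl π B i s m} ∪
     {u | ∃ i s j t m, ((i, s) : Fin n × Bool) ≠ (j, t) ∧ m ∈ B ∧ u = phiEl π B i s j t m})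

/-- `X_{i₁} ∘ ⋯ ∘ X_{i_k}` for a sequence of signed indices. -/
def Xcomp (π : LaurentS n k →ₗ[k] LaurentS n k) :
    List (Fin n × Bool) → LaurentS n k →ₗ[k] LaurentS n k
  | [] => LinearMap.id
  | q :: L => (Xop π q.1 q.2) ∘ₗ Xcomp π L

/-- `Ψ_{i₁,…,i_k} = Σ_{l=1}^{k} x_{i₁}⋯x_{i_{l−1}} Y_{i_l}[X_{i_{l+1}} ∘ ⋯ ∘ X_{i_k}(1)]`. -/
def Psi (π : LaurentS n k →ₗ[k] LaurentS n k) (B : Set (Exp n)) :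
    List (Fin n × Bool) → S1 n k B
  | [] => 0
  | q :: L => YsymL k B q.1 q.2 (Xcomp π L 1) + varX k q.1 q.2 • Psi π B L

/-- Degree on `S₁`: max over the nonzero terms `m₁ Y_i[m₂]` of `δ(m₁)`
(`⊥` for the zero element). -/
def s1deg {B : Set (Exp n)} (u : S1 n k B) : WithBot ℕ :=
  u.support.sup fun q => (pdeg (u q) : WithBot ℕ)

end ToricBorderBasis

/-!
Both `L ↦ X_L(1)` and `L ↦ Ψ_L mod K₁` are unchanged when two adjacent letters of the word `L`
are swapped (by the commutation of the `X_i`, resp. because the difference of the `Ψ`'s is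
`φ_{i,j}(X_L(1))`) and when a leading pair `x_i x_{-i}` is deleted (by `X_i X_{-i} = Id`, resp.
because the difference is `ρ_i(X_L(1))`); prepending a letter preserves equality of both.
Since `ℤⁿ` is presented by commuting generators `x_i` with `x_i x_{-i} = 1`, such moves connect
any two words with the same monomial.
-/

namespace ToricBorderBasis

section

variable {k : Type*} [Field k] {n : ℕ}

def wordExp (L : List (Fin n × Bool)) : Exp n := (L.map fun q => expOf n q.1 q.2).sum

@[simp] lemma wordExp_nil : wordExp ([] : List (Fin n × Bool)) = 0 := rfl

@[simp] lemma wordExp_cons (q : Fin n × Bool) (L : List (Fin n × Bool)) :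
    wordExp (q :: L) = expOf n q.1 q.2 + wordExp L := by
  simp [wordExp]

lemma wordExp_perm {L L' : List (Fin n × Bool)} (h : L.Perm L') : wordExp L = wordExp L' :=
  (h.map _).sum_eq

lemma expOf_add_expOf_not (i : Fin n) (s : Bool) : expOf n i s + expOf n i (!s) = 0 := by
  cases s <;> simp [expOf, ← Pi.single_add]

lemma wordExp_apply (L : List (Fin n × Bool)) (i : Fin n) :
    wordExp L i = (L.count (i, true) : ℤ) - L.count (i, false) := by
  induction L with
  | nil => simp
  | cons q L ih =>
    obtain ⟨j, t⟩ := q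
    rw [wordExp_cons, Pi.add_apply, ih]
    rcases eq_or_ne j i with rfl | hji
    · cases t <;> simp [expOf] <;> ring
    · cases t <;> simp [expOf, hji, Prod.ext_iff]

lemma mem_of_wordExp_cons_eq_zero {i : Fin n} {s : Bool} {M : List (Fin n × Bool)}
    (h : wordExp ((i, s) :: M) = 0) : (i, !s) ∈ M := by
  have hi := congrFun h i
  rw [wordExp_apply] at hi
  by_contra hM
  have h0 : M.count (i, !s) = 0 := List.count_eq_zero.mpr hM
  cases s <;> simp at hi h0 <;> omega

section WordInvariant

variable {β : Type*} (f : List (Fin n × Bool) → β)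

lemma eq_of_perm (hcons : ∀ q L L', f L = f L' → f (q :: L) = f (q :: L'))
    (hswap : ∀ a c L, f (a :: c :: L) = f (c :: a :: L))
    {L L' : List (Fin n × Bool)} (h : L.Perm L') : f L = f L' := by
  induction h with
  | nil => rfl
  | cons q _ ih => exact hcons q _ _ ih
  | swap a c L => exact hswap c a L
  | trans _ _ ih₁ ih₂ => exact ih₁.trans ih₂

lemma eq_nil_of_wordExp_eq_zero (hcons : ∀ q L L', f L = f L' → f (q :: L) = f (q :: L'))
    (hswap : ∀ a c L, f (a :: c :: L) = f (c :: a :: L))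
    (hcancel : ∀ i s L, f ((i, s) :: (i, !s) :: L) = f L) :
    ∀ L : List (Fin n × Bool), wordExp L = 0 → f L = f []
  | [], _ => rfl
  | (i, s) :: M, h => by
    have hmem := mem_of_wordExp_cons_eq_zero h
    have hperm : ((i, s) :: M).Perm ((i, s) :: (i, !s) :: M.erase (i, !s)) :=
      (List.perm_cons_erase hmem).cons _
    have hrest : wordExp (M.erase (i, !s)) = 0 := by
      rwa [wordExp_perm hperm, wordExp_cons, wordExp_cons, ← add_assoc,
        expOf_add_expOf_not, zero_add] at h
    have : (M.erase (i, !s)).length < M.length + 1 := by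
      rw [List.length_erase_of_mem hmem]; omega
    calc f ((i, s) :: M) = f ((i, s) :: (i, !s) :: M.erase (i, !s)) :=
          eq_of_perm f hcons hswap hperm
      _ = f (M.erase (i, !s)) := hcancel i s _
      _ = f [] := eq_nil_of_wordExp_eq_zero hcons hswap hcancel _ hrest
termination_by L => L.length

theorem eq_of_wordExp_eq (hcons : ∀ q L L', f L = f L' → f (q :: L) = f (q :: L'))
    (hswap : ∀ a c L, f (a :: c :: L) = f (c :: a :: L))
    (hcancel : ∀ i s L, f ((i, s) :: (i, !s) :: L) = f L)
    {L L' : List (Fin n × Bool)} (h : wordExp L = wordExp L') : f L = f L' := by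
  induction L generalizing L' with
  | nil => exact (eq_nil_of_wordExp_eq_zero f hcons hswap hcancel L' h.symm).symm
  | cons q M ih =>
    obtain ⟨i, s⟩ := q
    have hM : wordExp M = wordExp ((i, !s) :: L') := by
      rw [wordExp_cons, ← h, wordExp_cons, ← add_assoc, add_comm (expOf n i !s),
        expOf_add_expOf_not, zero_add]
    calc f ((i, s) :: M) = f ((i, s) :: (i, !s) :: L') := hcons _ _ _ (ih hM)
      _ = f L' := hcancel i s L'

end WordInvariant

lemma mono_add (α β : Exp n) : mono k (α + β) = mono k α * mono k β := by
  simp [mono, AddMonoidAlgebra.ofCoeff_single, AddMonoidAlgebra.single_mul_single]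

lemma mono_injective : Function.Injective (mono k (n := n)) := fun α β h => by
  simpa [mono, AddMonoidAlgebra.single_left_inj (one_ne_zero (α := k))] using h

lemma prod_map_varX (L : List (Fin n × Bool)) :
    (L.map fun q => varX k q.1 q.2).prod = mono k (wordExp L) := by
  induction L with
  | nil => rfl
  | cons q L ih => rw [List.map_cons, List.prod_cons, ih, wordExp_cons, mono_add]; rfl

lemma varX_mul_varX_not (i : Fin n) (s : Bool) : varX k i s * varX k i (!s) = 1 := by
  rw [varX, varX, ← mono_add, expOf_add_expOf_not]; rfl

section Syzygies

variable (B : Set (Exp n)) (π : LaurentS n k →ₗ[k] LaurentS n k)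

lemma map_mem_of_mono_mem {M : Type*} [AddCommMonoid M] [Module k M]
    (f : LaurentS n k →ₗ[k] M) (K : Submodule k M) (h : ∀ α ∈ B, f (mono k α) ∈ K)
    {b : LaurentS n k} (hb : b ∈ spanMon k B) : f b ∈ K :=
  (Submodule.span_le (p := K.comap f)).mpr (by rintro _ ⟨α, hα, rfl⟩; exact h α hα) hb

lemma varX_mul_mem_spanMon_Bx (i : Fin n) (s : Bool) {b : LaurentS n k}
    (hb : b ∈ spanMon k B) : varX k i s * b ∈ spanMon k (Bx B) :=
  map_mem_of_mono_mem B (LinearMap.mulLeft k (varX k i s)) _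
    (fun α hα => Submodule.subset_span
      (show _ ∈ {p | ∃ β ∈ Bx B, p = mono k β} from
        ⟨_, Or.inr ⟨i, s, α, hα, rfl⟩, (mono_add _ _).symm⟩)) hb

lemma Xcomp_one_mem_spanMon (hπ : IsProj π B) (h0 : (0 : Exp n) ∈ B) :
    ∀ L : List (Fin n × Bool), Xcomp π L 1 ∈ spanMon k B
  | [] => Submodule.subset_span ⟨0, h0, rfl⟩
  | q :: L => hπ.1 _ (varX_mul_mem_spanMon_Bx B q.1 q.2 (Xcomp_one_mem_spanMon hπ h0 L))

def ysymLin (i : Fin n) (s : Bool) : LaurentS n k →ₗ[k] S1 n k B :=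
  Finsupp.linearCombination k (Ysym k B i s) ∘ₗ (AddMonoidAlgebra.coeffLinearEquiv k).toLinearMap

lemma ysymLin_apply (i : Fin n) (s : Bool) (b : LaurentS n k) :
    ysymLin B i s b = YsymL k B i s b :=
  Finsupp.linearCombination_apply _ _

lemma YsymL_mono (i : Fin n) (s : Bool) (α : Exp n) :
    YsymL k B i s (mono k α) = Ysym k B i s α := by
  simp [← ysymLin_apply, ysymLin, mono]

lemma rho_mem_K1 (i : Fin n) (s : Bool) {b : LaurentS n k} (hb : b ∈ spanMon k B) :
    varX k i s • YsymL k B i (!s) b + YsymL k B i s (Xop π i (!s) b) ∈ K1 π B := by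
  have := map_mem_of_mono_mem B
    (varX k i s • ysymLin B i (!s) + ysymLin B i s ∘ₗ Xop π i (!s)) ((K1 π B).restrictScalars k)
    (fun α hα => Submodule.subset_span (Or.inl ⟨i, s, α, hα, by
      simp [rhoEl, ysymLin_apply, YsymL_mono]⟩)) hb
  simpa [ysymLin_apply] using this

lemma phi_mem_K1 {i j : Fin n} {s t : Bool} (hne : ((i, s) : Fin n × Bool) ≠ (j, t))
    {b : LaurentS n k} (hb : b ∈ spanMon k B) :
    varX k i s • YsymL k B j t b - varX k j t • YsymL k B i s b
      - YsymL k B j t (Xop π i s b) + YsymL k B i s (Xop π j t b) ∈ K1 π B := by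
  have := map_mem_of_mono_mem B
    (varX k i s • ysymLin B j t - varX k j t • ysymLin B i s
      - ysymLin B j t ∘ₗ Xop π i s + ysymLin B i s ∘ₗ Xop π j t) ((K1 π B).restrictScalars k)
    (fun α hα => Submodule.subset_span (Or.inr ⟨i, s, j, t, α, hne, hα, by
      simp [phiEl, ysymLin_apply, YsymL_mono]⟩)) hb
  simpa [ysymLin_apply] using this

lemma Psi_swap_sub_mem_K1 (a c : Fin n × Bool) {L : List (Fin n × Bool)}
    (hL : Xcomp π L 1 ∈ spanMon k B) : Psi π B (a :: c :: L) - Psi π B (c :: a :: L) ∈ K1 π B := by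
  rcases eq_or_ne a c with rfl | hne
  · rw [sub_self]; exact zero_mem _
  convert phi_mem_K1 B π hne hL using 1
  simp only [Psi, Xcomp, LinearMap.comp_apply, smul_add, smul_smul, mul_comm (varX k c.1 c.2)]
  abel

lemma Psi_cancel_sub_mem_K1 (i : Fin n) (s : Bool) {L : List (Fin n × Bool)}
    (hL : Xcomp π L 1 ∈ spanMon k B) : Psi π B ((i, s) :: (i, !s) :: L) - Psi π B L ∈ K1 π B := by
  convert rho_mem_K1 B π i s hL using 1
  simp only [Psi, Xcomp, LinearMap.comp_apply, smul_add, smul_smul, varX_mul_varX_not, one_smul]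
  abel

lemma Psi_sub_mem_K1_of_wordExp_eq (hπ : IsProj π B) (hcomm : CommRelAll π B)
    (hinv : InvRelAll π B) (h0 : (0 : Exp n) ∈ B) {L L' : List (Fin n × Bool)}
    (h : wordExp L = wordExp L') : Psi π B L - Psi π B L' ∈ K1 π B := by
  have hmem := Xcomp_one_mem_spanMon B π hπ h0
  suffices (Xcomp π L 1, (K1 π B).mkQ (Psi π B L)) = (Xcomp π L' 1, (K1 π B).mkQ (Psi π B L'))
    from (Submodule.Quotient.eq _).mp (congrArg Prod.snd this)
  refine eq_of_wordExp_eq (fun L => (Xcomp π L 1, (K1 π B).mkQ (Psi π B L)))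
    (fun q L L' hLL' => ?_) (fun a c L => ?_) (fun i s L => ?_) h
  · simp only [Prod.mk.injEq] at hLL' ⊢
    simp only [Psi, Xcomp, LinearMap.comp_apply, map_add, map_smul, hLL', and_self]
  · refine Prod.ext (hcomm c.1 c.2 a.1 a.2 _ (hmem L)).symm ?_
    exact (Submodule.Quotient.eq _).mpr (Psi_swap_sub_mem_K1 B π a c (hmem L))
  · refine Prod.ext (hinv i s _ (hmem L)) ?_
    exact (Submodule.Quotient.eq _).mpr (Psi_cancel_sub_mem_K1 B π i s (hmem L))

end Syzygies

end

theorem statement_14_general {n : ℕ} {k : Type*} [Field k]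
    (B : Set (Exp n)) (hB1 : ConnectedToOne B)
    (π : LaurentS n k →ₗ[k] LaurentS n k) (hπ : IsProj π B)
    (hcomm : CommRelAll π B) (hinv : InvRelAll π B) :
    ∀ L L' : List (Fin n × Bool),
      (L.map fun q => varX k q.1 q.2).prod = (L'.map fun q => varX k q.1 q.2).prod →
      Psi π B L - Psi π B L' ∈ K1 π B := by
  intro L L' h
  rw [prod_map_varX, prod_map_varX] at h
  exact Psi_sub_mem_K1_of_wordExp_eq B π hπ hcomm hinv hB1.1 (mono_injective h)

/-- For all sequences `i₁,…,i_k` and `j₁,…,j_{k′}` in `[−n,n]*`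
with `x_{i₁}⋯x_{i_k} = x_{j₁}⋯x_{j_{k′}}` as monomials, one has
`Ψ_{i₁,…,i_k} − Ψ_{j₁,…,j_{k′}} ∈ K₁`. -/
theorem statement_14 {n : ℕ} {k : Type*} [Field k]
    (B : Set (Exp n)) (hBfin : B.Finite) (hB1 : ConnectedToOne B)
    (π : LaurentS n k →ₗ[k] LaurentS n k) (hπ : IsProj π B)
    (hcomm : CommRelAll π B) (hinv : InvRelAll π B) :
    ∀ L L' : List (Fin n × Bool),
      (L.map fun q => varX k q.1 q.2).prod = (L'.map fun q => varX k q.1 q.2).prod →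
      Psi π B L - Psi π B L' ∈ K1 π B :=
  statement_14_general B hB1 π hπ hcomm hinv

end ToricBorderBasis
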